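/- Let b ≥ c ≥ w ≥ 1 be integers and set y := ⌊b/c⌋. Then k(b, w) ≥ C(c, w)·y^w. -/
import Mathlib

/-- `multipartitions b w` is the number of `b`-multipartitions of `w`, i.e. the
number of `b`-tuples `(λ₁, …, λ_b)` of integer partitions with `|λ₁| + ⋯ + |λ_b| = w`. -/
noncomputable def multipartitions (b w : ℕ) : ℕ :=
  Nat.card {f : Fin b → Σ n : ℕ, n.Partition // (∑ i, (f i).1) = w}


namespace MPAux

lemma encode_inj {y : ℕ} (hy : 0 < y) {a a' v v' : ℕ} (hv : v < y) (hv' : v' < y)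
    (h : a * y + v = a' * y + v') : a = a' ∧ v = v' := by
  have hdiv : ∀ (a v : ℕ), v < y → (a * y + v) / y = a := by
    intro a v hv
    rw [Nat.add_comm, Nat.add_mul_div_right _ _ hy, Nat.div_eq_of_lt hv, Nat.zero_add]
  have ha : a = a' := by
    have := congrArg (· / y) h
    simpa [hdiv a v hv, hdiv a' v' hv'] using this
  subst ha
  exact ⟨rfl, Nat.add_left_cancel h⟩

def P1 : Σ n : ℕ, n.Partition := ⟨1, Nat.Partition.indiscrete 1⟩
def P0 : Σ n : ℕ, n.Partition := ⟨0, Nat.Partition.indiscrete 0⟩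

lemma P1_ne_P0 : P1 ≠ P0 := fun h => by simpa [P0, P1] using congrArg Sigma.fst h

variable {b c w y : ℕ}

def Src (c w y : ℕ) := {s : Finset (Fin c) // s.card = w} × (Fin w → Fin y)

def pos (hy : 0 < y) (hcy : c * y ≤ b) (a : Src c w y) (k : Fin w) : Fin b :=
  ⟨(((a.1.1.orderIsoOfFin a.1.2 k : {x // x ∈ a.1.1}) : Fin c) : ℕ) * y + (a.2 k : ℕ), by
    have h1 : (((a.1.1.orderIsoOfFin a.1.2 k : {x // x ∈ a.1.1}) : Fin c) : ℕ) < c :=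
      Fin.isLt _
    have h2 : (a.2 k : ℕ) < y := Fin.isLt _
    calc (((a.1.1.orderIsoOfFin a.1.2 k : {x // x ∈ a.1.1}) : Fin c) : ℕ) * y + (a.2 k : ℕ)
        < ((((a.1.1.orderIsoOfFin a.1.2 k : {x // x ∈ a.1.1}) : Fin c) : ℕ) + 1) * y := by
          rw [Nat.succ_mul]; omega
      _ ≤ c * y := Nat.mul_le_mul_right y h1
      _ ≤ b := hcy⟩

lemma pos_eq (hy : 0 < y) (hcy : c * y ≤ b) {a a' : Src c w y} {k k' : Fin w}
    (h : pos hy hcy a k = pos hy hcy a' k') :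
    (((a.1.1.orderIsoOfFin a.1.2 k : {x // x ∈ a.1.1}) : Fin c) : ℕ)
      = (((a'.1.1.orderIsoOfFin a'.1.2 k' : {x // x ∈ a'.1.1}) : Fin c) : ℕ)
    ∧ (a.2 k : ℕ) = (a'.2 k' : ℕ) :=
  encode_inj hy (Fin.isLt _) (Fin.isLt _) (congrArg Fin.val h)

lemma pos_inj (hy : 0 < y) (hcy : c * y ≤ b) (a : Src c w y) :
    Function.Injective (pos hy hcy a) := by
  intro k k' h
  obtain ⟨h1, h2⟩ := pos_eq hy hcy h
  have : (a.1.1.orderIsoOfFin a.1.2 k) = (a.1.1.orderIsoOfFin a.1.2 k') :=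
    Subtype.ext (Fin.ext h1)
  exact (a.1.1.orderIsoOfFin a.1.2).injective this

def S (hy : 0 < y) (hcy : c * y ≤ b) (a : Src c w y) : Finset (Fin b) :=
  Finset.image (pos hy hcy a) Finset.univ

lemma S_card (hy : 0 < y) (hcy : c * y ≤ b) (a : Src c w y) : (S hy hcy a).card = w := by
  rw [S, Finset.card_image_of_injective _ (pos_inj hy hcy a), Finset.card_univ,
    Fintype.card_fin]

def φ (hy : 0 < y) (hcy : c * y ≤ b)
    (a : Src c w y) : {f : Fin b → Σ n : ℕ, n.Partition // (∑ i, (f i).1) = w} :=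
  ⟨fun i => if i ∈ S hy hcy a then P1 else P0, by
    have : ∀ i : Fin b, ((if i ∈ S hy hcy a then P1 else P0).1)
        = (if i ∈ S hy hcy a then 1 else 0) := by
      intro i; split <;> rfl
    rw [Finset.sum_congr rfl fun i _ => this i, Finset.sum_ite_mem, Finset.univ_inter,
      Finset.sum_const, smul_eq_mul, mul_one, S_card]⟩

lemma φ_inj (hy : 0 < y) (hcy : c * y ≤ b) :
    Function.Injective (φ (b := b) (c := c) (w := w) hy hcy) := by
  intro a a' h
  have hf := congrArg Subtype.val h
  -- supports are equal
  have hS : S hy hcy a = S hy hcy a' := by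
    ext i
    have hi := congrFun hf i
    simp only [φ] at hi
    constructor <;> intro hmem <;> by_contra hnm
    · rw [if_pos hmem, if_neg hnm] at hi; exact P1_ne_P0 hi
    · rw [if_neg hnm, if_pos hmem] at hi; exact P1_ne_P0 hi.symm
  obtain ⟨⟨s, hs⟩, g⟩ := a
  obtain ⟨⟨s', hs'⟩, g'⟩ := a'
  -- key claim
  have key : ∀ k : Fin w, ∃ k' : Fin w,
      ((((⟨s, hs⟩, g) : Src c w y).1.1.orderIsoOfFin hs k : Fin c) : ℕ)
        = ((((⟨s', hs'⟩, g') : Src c w y).1.1.orderIsoOfFin hs' k' : Fin c) : ℕ)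
      ∧ (g k : ℕ) = (g' k' : ℕ) := by
    intro k
    have hmem : pos hy hcy (⟨s, hs⟩, g) k ∈ S hy hcy ((⟨s', hs'⟩, g') : Src c w y) := by
      rw [← hS]; exact Finset.mem_image_of_mem _ (Finset.mem_univ k)
    obtain ⟨k', _, hk'⟩ := Finset.mem_image.mp hmem
    obtain ⟨h1, h2⟩ := pos_eq hy hcy hk'
    exact ⟨k', h1.symm, h2.symm⟩
  -- s ⊆ s'
  have hsub : s ⊆ s' := by
    intro x hx
    obtain ⟨k', h1, _⟩ := key ((s.orderIsoOfFin hs).symm ⟨x, hx⟩)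
    rw [OrderIso.apply_symm_apply] at h1
    have : (x : ℕ) = ((s'.orderIsoOfFin hs' k' : Fin c) : ℕ) := h1
    have hx' : x = ((s'.orderIsoOfFin hs' k' : {x // x ∈ s'}) : Fin c) := Fin.ext this
    rw [hx']
    exact (s'.orderIsoOfFin hs' k').2
  have hss : s = s' := Finset.eq_of_subset_of_card_le hsub (by rw [hs, hs'])
  subst hss
  have hgg : g = g' := by
    funext k
    obtain ⟨k', h1, h2⟩ := key k
    have he : (s.orderIsoOfFin hs k) = (s.orderIsoOfFin hs' k') := Subtype.ext (Fin.ext h1)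
    have hpe : (hs : s.card = w) = hs' := rfl
    rw [hpe] at he
    have : k = k' := (s.orderIsoOfFin hs').injective he
    subst this
    exact Fin.ext h2
  subst hgg
  rfl

end MPAux

open MPAux in
theorem multipartitions_lower_bound_aux (b c w : ℕ) (hw : 1 ≤ w) (hcw : w ≤ c) (hbc : c ≤ b) :
    c.choose w * (b / c) ^ w ≤
      Nat.card {f : Fin b → Σ n : ℕ, n.Partition // (∑ i, (f i).1) = w} := by
  have hc : 0 < c := lt_of_lt_of_le hw hcw
  set y := b / c with hydef
  have hy : 0 < y := (Nat.one_le_div_iff hc).mpr hbc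
  have hcy : c * y ≤ b := by
    rw [hydef, mul_comm]; exact Nat.div_mul_le_self b c
  have hfin : Finite {f : Fin b → Σ n : ℕ, n.Partition // (∑ i, (f i).1) = w} := by
    have hle : ∀ (f : {f : Fin b → Σ n : ℕ, n.Partition // (∑ i, (f i).1) = w}) (i : Fin b),
        (f.1 i).1 < w + 1 := by
      intro f i
      have h0 : (f.1 i).1 ≤ ∑ j, (f.1 j).1 :=
        Finset.single_le_sum (f := fun j => (f.1 j).1) (fun j _ => Nat.zero_le _) (Finset.mem_univ i)
      have h1 := f.2
      omega
    let F : {f : Fin b → Σ n : ℕ, n.Partition // (∑ i, (f i).1) = w} →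
        (Fin b → Σ n : Fin (w + 1), Nat.Partition (n : ℕ)) :=
      fun f i => ⟨⟨(f.1 i).1, hle f i⟩, (f.1 i).2⟩
    have hFinj : Function.Injective F := by
      intro f f' h
      apply Subtype.ext; funext i
      have h2 := congrFun h i
      obtain ⟨h3, h4⟩ := Sigma.ext_iff.mp h2
      exact Sigma.ext (congrArg Fin.val h3) h4
    exact Finite.of_injective F hFinj
  have hcardA : Nat.card (Src c w y) = c.choose w * y ^ w := by
    have h5 : (Finset.univ.filter fun s : Finset (Fin c) => s.card = w)
        = Finset.powersetCard w Finset.univ := by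
      ext s; simp [Finset.mem_powersetCard_univ]
    rw [Src, Nat.card_eq_fintype_card, Fintype.card_prod, Fintype.card_subtype, h5,
      Finset.card_powersetCard, Finset.card_univ, Fintype.card_fin, Fintype.card_fun,
      Fintype.card_fin, Fintype.card_fin]
  calc c.choose w * y ^ w = Nat.card (Src c w y) := hcardA.symm
    _ ≤ _ := Nat.card_le_card_of_injective _ (φ_inj hy hcy)

theorem multipartitions_lower_bound (b c w : ℕ) (hw : 1 ≤ w) (hcw : w ≤ c) (hbc : c ≤ b) :
    c.choose w * (b / c) ^ w ≤ multipartitions b w := by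
  unfold multipartitions
  exact multipartitions_lower_bound_aux b c w hw hcw hbc
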